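/- arXiv:1506.04445 — 6 statements merged into one kernel-verified Lean document; each statement's English description precedes it below -/
import Mathlib

section
/- The PT-symmetric Schrödinger operator L is self-adjoint with respect to the PT-product: for all Schwartz functions f, g : ℝ → ℂ, one has ⟨Lf, g⟩_PT = ⟨f, Lg⟩_PT. -/
open MeasureTheory Complex

/-- The PT-product `⟨f,g⟩_PT = ∫_ℝ conj(f(-x))·g(x) dx`. -/
noncomputable def PTprod (f g : ℝ → ℂ) : ℂ :=
  ∫ x : ℝ, (starRingEnd ℂ) (f (-x)) * g x

lemma aux_int (h : ℝ → ℂ) (hc : Continuous h) (hb : ∃ C, ∀ x, ‖h x‖ ≤ C)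
    (φ : SchwartzMap ℝ ℂ) : Integrable (fun x => h x * φ x) :=
  by obtain ⟨C, hC⟩ := hb; exact φ.integrable.bdd_mul hc.aestronglyMeasurable (Filter.Eventually.of_forall hC)

lemma schwartz_bdd (f : SchwartzMap ℝ ℂ) : ∃ C, ∀ x, ‖f x‖ ≤ C :=
  ⟨(SchwartzMap.seminorm ℝ 0 0) f, fun x => f.norm_le_seminorm ℝ x⟩

/-- The PT-symmetric Schrödinger operator `L f = f'' + V·f` is "self-adjoint"
with respect to the PT-product: `⟨Lf, g⟩_PT = ⟨f, Lg⟩_PT` for Schwartz `f, g`. -/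
theorem PT_selfadjoint (V : ℝ → ℂ) (hVcont : Continuous V)
    (hVbdd : ∃ C : ℝ, ∀ x : ℝ, ‖V x‖ ≤ C)
    (hVPT : ∀ x : ℝ, (starRingEnd ℂ) (V (-x)) = V x)
    (f g : SchwartzMap ℝ ℂ) :
    PTprod (fun x => deriv (deriv f) x + V x * f x) (fun x => g x)
      = PTprod (fun x => f x) (fun x => deriv (deriv g) x + V x * g x) := by
  obtain ⟨CV, hCV⟩ := hVbdd
  set f1 := SchwartzMap.derivCLM ℝ ℂ f with hf1
  set f2 := SchwartzMap.derivCLM ℝ ℂ f1 with hf2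
  set g1 := SchwartzMap.derivCLM ℝ ℂ g with hg1
  set g2 := SchwartzMap.derivCLM ℝ ℂ g1 with hg2
  have hdf : deriv (⇑f) = ⇑f1 := funext fun x => (SchwartzMap.derivCLM_apply (𝕜 := ℝ) (f := f) (x := x)).symm
  have hdf1 : deriv (⇑f1) = ⇑f2 := funext fun x => (SchwartzMap.derivCLM_apply (𝕜 := ℝ) (f := f1) (x := x)).symm
  have hdg : deriv (⇑g) = ⇑g1 := funext fun x => (SchwartzMap.derivCLM_apply (𝕜 := ℝ) (f := g) (x := x)).symm
  have hdg1 : deriv (⇑g1) = ⇑g2 := funext fun x => (SchwartzMap.derivCLM_apply (𝕜 := ℝ) (f := g1) (x := x)).symm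
  -- the PT-conjugated functions
  set F : ℝ → ℂ := fun x => (starRingEnd ℂ) (f (-x)) with hF
  set F1 : ℝ → ℂ := fun x => -(starRingEnd ℂ) (f1 (-x)) with hF1
  set F2 : ℝ → ℂ := fun x => (starRingEnd ℂ) (f2 (-x)) with hF2
  have hderivAt : ∀ (φ φ' : SchwartzMap ℝ ℂ), deriv (⇑φ) = ⇑φ' →
      ∀ x : ℝ, HasDerivAt φ (φ' x) x := by
    intro φ φ' h x
    have := φ.differentiableAt.hasDerivAt (x := x)
    rwa [show deriv (⇑φ) x = φ' x from congrFun h x] at this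
  have hFd : ∀ x, HasDerivAt F (F1 x) x := by
    intro x
    have h1 : HasDerivAt (fun y : ℝ => f (-y)) ((-1 : ℝ) • f1 (-x)) x :=
      (hderivAt f f1 hdf (-x)).scomp x (hasDerivAt_neg x)
    have h2 := h1.star
    simpa [F, Complex.star_def] using h2
  have hF1d : ∀ x, HasDerivAt F1 (F2 x) x := by
    intro x
    have h1 : HasDerivAt (fun y : ℝ => f1 (-y)) ((-1 : ℝ) • f2 (-x)) x :=
      (hderivAt f1 f2 hdf1 (-x)).scomp x (hasDerivAt_neg x)
    have h2 := h1.star.neg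
    simpa [F1, F2, Complex.star_def, Pi.neg_def] using h2
  -- continuity and boundedness of F, F1, F2
  have contF : Continuous F := Complex.continuous_conj.comp (f.continuous.comp continuous_neg)
  have contF1 : Continuous F1 :=
    (Complex.continuous_conj.comp (f1.continuous.comp continuous_neg)).neg
  have contF2 : Continuous F2 := Complex.continuous_conj.comp (f2.continuous.comp continuous_neg)
  have bddF : ∃ C, ∀ x, ‖F x‖ ≤ C := by
    obtain ⟨C, hC⟩ := schwartz_bdd f; exact ⟨C, fun x => by simpa [F] using hC (-x)⟩
  have bddF1 : ∃ C, ∀ x, ‖F1 x‖ ≤ C := by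
    obtain ⟨C, hC⟩ := schwartz_bdd f1; exact ⟨C, fun x => by simpa [F1] using hC (-x)⟩
  have bddF2 : ∃ C, ∀ x, ‖F2 x‖ ≤ C := by
    obtain ⟨C, hC⟩ := schwartz_bdd f2; exact ⟨C, fun x => by simpa [F2] using hC (-x)⟩
  -- key integration by parts: ∫ F2 * g = ∫ F * g2
  have key : ∫ x : ℝ, F2 x * g x = ∫ x : ℝ, F x * g2 x := by
    have ibp1 : ∫ x : ℝ, F x * g2 x = - ∫ x : ℝ, F1 x * g1 x := by
      have := integral_mul_deriv_eq_deriv_mul_of_integrable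
        (u := F) (v := ⇑g1) (u' := F1) (v' := ⇑g2)
        (fun x _ => hFd x) (fun x _ => hderivAt g1 g2 hdg1 x)
        (by simpa [Pi.mul_def] using aux_int F contF bddF g2)
        (by simpa [Pi.mul_def] using aux_int F1 contF1 bddF1 g1)
        (by simpa [Pi.mul_def] using aux_int F contF bddF g1)
      exact this
    have ibp2 : ∫ x : ℝ, F1 x * g1 x = - ∫ x : ℝ, F2 x * g x := by
      have := integral_mul_deriv_eq_deriv_mul_of_integrable
        (u := F1) (v := ⇑g) (u' := F2) (v' := ⇑g1)
        (fun x _ => hF1d x) (fun x _ => hderivAt g g1 hdg x)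
        (by simpa [Pi.mul_def] using aux_int F1 contF1 bddF1 g1)
        (by simpa [Pi.mul_def] using aux_int F2 contF2 bddF2 g)
        (by simpa [Pi.mul_def] using aux_int F1 contF1 bddF1 g)
      exact this
    rw [ibp1, ibp2, neg_neg]
  -- now put everything together
  have hVF : Continuous fun x => F x * V x := contF.mul hVcont
  have bddVF : ∃ C, ∀ x, ‖F x * V x‖ ≤ C := by
    obtain ⟨C, hC⟩ := bddF
    exact ⟨C * CV, fun x => by
      rw [norm_mul]
      exact mul_le_mul (hC x) (hCV x) (norm_nonneg _) ((norm_nonneg _).trans (hC x))⟩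
  have hL : PTprod (fun x => deriv (deriv f) x + V x * f x) (fun x => g x)
      = (∫ x : ℝ, F2 x * g x) + ∫ x : ℝ, F x * V x * g x := by
    rw [PTprod, ← integral_add (by simpa [Pi.mul_def] using aux_int F2 contF2 bddF2 g)
      (by simpa [Pi.mul_def, mul_assoc] using aux_int _ hVF bddVF g)]
    congr 1; ext x
    rw [hdf, hdf1]
    simp only [map_add, map_mul, hVPT, F, F2]
    ring
  have hR : PTprod (fun x => f x) (fun x => deriv (deriv g) x + V x * g x)
      = (∫ x : ℝ, F x * g2 x) + ∫ x : ℝ, F x * V x * g x := by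
    rw [PTprod, ← integral_add (by simpa [Pi.mul_def] using aux_int F contF bddF g2)
      (by simpa [Pi.mul_def, mul_assoc] using aux_int _ hVF bddVF g)]
    congr 1; ext x
    rw [hdg, hdg1]
    simp only [F]
    ring
  rw [hL, hR, key]
end

section
/- (Lemma 1) Let u₁ and u₂ be Schwartz eigenfunctions of the PT-symmetric Schrödinger operator L with real eigenvalues μ₁ and μ₂ respectively, i.e. u₁'' + V·u₁ = -μ₁·u₁ and u₂'' + V·u₂ = -μ₂·u₂, where μ₁, μ₂ ∈ ℝ. If μ₁ ≠ μ₂, then ⟨u₁, u₂⟩_PT = 0. -/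
/-!
Since `μ₁` is real and `V` is PT-symmetric, conjugating the eigen-equation of `u₁` at `-x`
gives `conj (u₁'' (-x)) + V x conj (u₁ (-x)) = -μ₁ conj (u₁ (-x))`, whose potential term
matches that of the eigen-equation of `u₂` at `x`. Eliminating it leaves
`(μ₂ - μ₁) conj (u₁ (-x)) u₂ x = conj (u₁'' (-x)) u₂ x - conj (u₁ (-x)) u₂'' x`,
and the right-hand side integrates to zero because `d/dx` is symmetric for the PT-product:
integrating by parts, the derivative of `x ↦ conj (u (-x))` is `x ↦ -conj (u' (-x))`, and
the two signs cancel.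
-/

open MeasureTheory Complex

open ComplexConjugate

namespace SchwartzMap

lemma coe_derivCLM (f : 𝓢(ℝ, ℂ)) : ⇑(derivCLM ℝ ℂ f) = deriv f :=
  funext (derivCLM_apply ℝ f)

lemma integrable_conj_comp_neg_mul (f g : 𝓢(ℝ, ℂ)) :
    Integrable (fun x : ℝ => conj (f (-x)) * g x) :=
  g.integrable.bdd_mul (f.continuous.comp continuous_neg).star.aestronglyMeasurable
    (.of_forall fun x => by simpa using f.norm_le_seminorm ℝ (-x))

lemma hasDerivAt_conj_comp_neg (f : 𝓢(ℝ, ℂ)) (x : ℝ) :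
    HasDerivAt (fun x : ℝ => conj (f (-x))) (-conj (deriv f (-x))) x := by
  simpa [Function.comp_def] using ((f.hasDerivAt (-x)).scomp x (hasDerivAt_neg x)).star

end SchwartzMap

open SchwartzMap in
theorem PTprod_deriv_right (f g : 𝓢(ℝ, ℂ)) : PTprod f (deriv g) = PTprod (deriv f) g := by
  have hfg' : Integrable fun x => conj (f (-x)) * deriv g x := by
    simpa only [coe_derivCLM] using integrable_conj_comp_neg_mul f (derivCLM ℝ ℂ g)
  have hf'g : Integrable fun x => -conj (deriv f (-x)) * g x := by
    simpa only [coe_derivCLM, Pi.neg_def, neg_mul] using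
      (integrable_conj_comp_neg_mul (derivCLM ℝ ℂ f) g).neg
  have h := integral_mul_deriv_eq_deriv_mul_of_integrable
    (fun x _ => f.hasDerivAt_conj_comp_neg x) (fun x _ => g.hasDerivAt x)
    hfg' hf'g (integrable_conj_comp_neg_mul f g)
  simpa only [PTprod, neg_mul, integral_neg, neg_neg] using h

open SchwartzMap in
theorem PTprod_deriv_deriv_right (f g : 𝓢(ℝ, ℂ)) :
    PTprod f (deriv (deriv g)) = PTprod (deriv (deriv f)) g := by
  have hg := PTprod_deriv_right f (derivCLM ℝ ℂ g)
  have hf := PTprod_deriv_right (derivCLM ℝ ℂ f) g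
  rw [coe_derivCLM] at hg hf
  rw [hg, hf]

lemma conj_comp_neg_of_eigen {V u : ℝ → ℂ} {μ : ℝ} (hVPT : ∀ x, conj (V (-x)) = V x)
    (hu : ∀ x, deriv (deriv u) x + V x * u x = -(μ : ℂ) * u x) (x : ℝ) :
    conj (deriv (deriv u) (-x)) + V x * conj (u (-x)) = -(μ : ℂ) * conj (u (-x)) := by
  simpa only [map_add, map_mul, map_neg, conj_ofReal, hVPT x] using congrArg conj (hu (-x))

theorem PT_orthogonality_general (V : ℝ → ℂ)
    (hVPT : ∀ x : ℝ, (starRingEnd ℂ) (V (-x)) = V x)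
    (μ₁ μ₂ : ℝ) (u₁ u₂ : SchwartzMap ℝ ℂ)
    (hu₁ : ∀ x : ℝ, deriv (deriv u₁) x + V x * u₁ x = -(μ₁ : ℂ) * u₁ x)
    (hu₂ : ∀ x : ℝ, deriv (deriv u₂) x + V x * u₂ x = -(μ₂ : ℂ) * u₂ x)
    (hne : μ₁ ≠ μ₂) :
    PTprod (fun x => u₁ x) (fun x => u₂ x) = 0 := by
  have hu₁_refl := conj_comp_neg_of_eigen hVPT hu₁
  have hgap : ((μ₂ : ℂ) - μ₁) * PTprod u₁ u₂ =
      PTprod (deriv (deriv u₁)) u₂ - PTprod u₁ (deriv (deriv u₂)) := by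
    have I₁ :=
      (SchwartzMap.derivCLM ℝ ℂ (.derivCLM ℝ ℂ u₁)).integrable_conj_comp_neg_mul u₂
    have I₂ := u₁.integrable_conj_comp_neg_mul (.derivCLM ℝ ℂ (.derivCLM ℝ ℂ u₂))
    simp only [SchwartzMap.coe_derivCLM] at I₁ I₂
    rw [PTprod, PTprod, PTprod, ← integral_const_mul, ← integral_sub I₁ I₂]
    congr 1 with x
    linear_combination conj (u₁ (-x)) * hu₂ x - u₂ x * hu₁_refl x
  rw [PTprod_deriv_deriv_right, sub_self] at hgap
  exact (mul_eq_zero.1 hgap).resolve_left (sub_ne_zero.2 (mod_cast hne.symm))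

/-- (Lemma 1) Eigenfunctions of the PT-symmetric Schrödinger operator `L = ∂ₓₓ + V`
corresponding to distinct real eigenvalues are PT-orthogonal. -/
theorem PT_orthogonality (V : ℝ → ℂ) (hVcont : Continuous V)
    (hVbdd : ∃ C : ℝ, ∀ x : ℝ, ‖V x‖ ≤ C)
    (hVPT : ∀ x : ℝ, (starRingEnd ℂ) (V (-x)) = V x)
    (μ₁ μ₂ : ℝ) (u₁ u₂ : SchwartzMap ℝ ℂ)
    (hu₁ : ∀ x : ℝ, deriv (deriv u₁) x + V x * u₁ x = -(μ₁ : ℂ) * u₁ x)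
    (hu₂ : ∀ x : ℝ, deriv (deriv u₂) x + V x * u₂ x = -(μ₂ : ℂ) * u₂ x)
    (hne : μ₁ ≠ μ₂) :
    PTprod (fun x => u₁ x) (fun x => u₂ x) = 0 :=
  PT_orthogonality_general V hVPT μ₁ μ₂ u₁ u₂ hu₁ hu₂ hne
end

section
/- (Lemma 2) Let u be a Schwartz eigenfunction of the PT-symmetric Schrödinger operator L with eigenvalue μ ∈ ℂ, i.e. u'' + V·u = -μ·u. Then (μ - conj(μ))·⟨u,u⟩_PT = 0; in particular, if μ is not real, then ⟨u, u⟩_PT = 0. -/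
open MeasureTheory Complex

/-!
Write `u*(x) = conj (u (-x))`. The PT-Wronskian `W = u* v' + (u')* v` has derivative
`u* v'' - (u'')* v`, and it is integrable together with its derivative, so this derivative
integrates to zero (Green's identity for the PT-product). For `v = u` an eigenfunction, the
PT-symmetry `conj (V (-x)) = V x` makes the potential terms cancel pointwise, leaving
`(conj μ - μ) u* u`; hence `(conj μ - μ) ⟨u, u⟩_PT = 0`.
-/

open ComplexConjugate SchwartzMap

theorem integrable_conj_comp_neg_mul (f : 𝓢(ℝ, ℂ)) {g : ℝ → ℂ} (hg : Integrable g) :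
    Integrable fun x => conj (f (-x)) * g x :=
  hg.bdd_mul (c := SchwartzMap.seminorm ℝ 0 0 f)
    (continuous_conj.comp (f.continuous.comp continuous_neg)).aestronglyMeasurable
    (ae_of_all _ fun x => by simpa using f.norm_le_seminorm ℝ (-x))

theorem hasDerivAt_conj_comp_neg {f : ℝ → ℂ} {f' : ℂ} {x : ℝ} (hf : HasDerivAt f f' (-x)) :
    HasDerivAt (fun y => conj (f (-y))) (-conj f') x := by
  simpa using (hf.scomp x (hasDerivAt_neg' x)).star

noncomputable def PTwronskian (u v : ℝ → ℂ) (x : ℝ) : ℂ :=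
  conj (u (-x)) * deriv v x + conj (deriv u (-x)) * v x

theorem hasDerivAt_PTwronskian (u v : 𝓢(ℝ, ℂ)) (x : ℝ) :
    HasDerivAt (PTwronskian u v)
      (conj (u (-x)) * deriv (deriv v) x - conj (deriv (deriv u) (-x)) * v x) x := by
  have h : HasDerivAt (PTwronskian u v)
      (-conj (deriv u (-x)) * deriv v x + conj (u (-x)) * deriv (deriv v) x +
        (-conj (deriv (deriv u) (-x)) * v x + conj (deriv u (-x)) * deriv v x)) x :=
    ((hasDerivAt_conj_comp_neg (u.hasDerivAt (-x))).mul ((derivCLM ℝ ℂ v).hasDerivAt x)).add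
      ((hasDerivAt_conj_comp_neg ((derivCLM ℝ ℂ u).hasDerivAt (-x))).mul (v.hasDerivAt x))
  exact h.congr_deriv (by ring)

theorem integrable_PTwronskian (u v : 𝓢(ℝ, ℂ)) : Integrable (PTwronskian u v) :=
  (integrable_conj_comp_neg_mul u (derivCLM ℝ ℂ v).integrable).add
    (integrable_conj_comp_neg_mul (derivCLM ℝ ℂ u) v.integrable)

theorem integral_conj_comp_neg_mul_deriv_deriv_sub_eq_zero (u v : 𝓢(ℝ, ℂ)) :
    ∫ x, (conj (u (-x)) * deriv (deriv v) x - conj (deriv (deriv u) (-x)) * v x) = 0 :=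
  integral_eq_zero_of_hasDerivAt_of_integrable (hasDerivAt_PTwronskian u v)
    ((integrable_conj_comp_neg_mul u (derivCLM ℝ ℂ (derivCLM ℝ ℂ v)).integrable).sub
      (integrable_conj_comp_neg_mul (derivCLM ℝ ℂ (derivCLM ℝ ℂ u)) v.integrable))
    (integrable_PTwronskian u v)

theorem PT_selfproduct_complex_eigenvalue_general (V : ℝ → ℂ)
    (hVPT : ∀ x : ℝ, (starRingEnd ℂ) (V (-x)) = V x)
    (μ : ℂ) (u : SchwartzMap ℝ ℂ)
    (hu : ∀ x : ℝ, deriv (deriv u) x + V x * u x = -μ * u x) :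
    (μ - (starRingEnd ℂ) μ) * PTprod (fun x => u x) (fun x => u x) = 0 ∧
      (μ.im ≠ 0 → PTprod (fun x => u x) (fun x => u x) = 0) := by
  have hpointwise : ∀ x, conj (u (-x)) * deriv (deriv u) x - conj (deriv (deriv u) (-x)) * u x
      = (conj μ - μ) * (conj (u (-x)) * u x) := by
    intro x
    rw [eq_sub_of_add_eq (hu x), eq_sub_of_add_eq (hu (-x))]
    simp only [map_sub, map_mul, map_neg, hVPT]
    ring
  have hgreen := integral_conj_comp_neg_mul_deriv_deriv_sub_eq_zero u u
  simp only [hpointwise, integral_const_mul] at hgreen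
  have hmain : (μ - conj μ) * PTprod (fun x => u x) (fun x => u x) = 0 := by
    unfold PTprod
    linear_combination -hgreen
  refine ⟨hmain, fun him => (mul_eq_zero.mp hmain).resolve_left ?_⟩
  simpa [Complex.sub_conj] using him

/-- (Lemma 2) For an eigenfunction `u` of the PT-symmetric Schrödinger operator with
eigenvalue `μ`, one has `(μ - conj μ)·⟨u,u⟩_PT = 0`; in particular if `μ` is not real
then `⟨u,u⟩_PT = 0`. -/
theorem PT_selfproduct_complex_eigenvalue (V : ℝ → ℂ) (hVcont : Continuous V)
    (hVbdd : ∃ C : ℝ, ∀ x : ℝ, ‖V x‖ ≤ C)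
    (hVPT : ∀ x : ℝ, (starRingEnd ℂ) (V (-x)) = V x)
    (μ : ℂ) (u : SchwartzMap ℝ ℂ)
    (hu : ∀ x : ℝ, deriv (deriv u) x + V x * u x = -μ * u x) :
    (μ - (starRingEnd ℂ) μ) * PTprod (fun x => u x) (fun x => u x) = 0 ∧
      (μ.im ≠ 0 → PTprod (fun x => u x) (fun x => u x) = 0) :=
  PT_selfproduct_complex_eigenvalue_general V hVPT μ u hu
end

section
/- Let μ ∈ ℂ be non-real, let u₂ be a Schwartz function with u₂'' + V·u₂ = -μ·u₂, and set u₁(x) := conj(u₂(-x)). Then the 2×2 Gram matrix M with entries M_{ij} = ⟨u_i, u_j⟩_PT satisfies M₁₁ = M₂₂ = 0, M₁₂ = ∫_ℝ u₂(x)² dx, M₂₁ = conj(∫_ℝ u₂(x)² dx), and det M = -|∫_ℝ u₂(x)² dx|². -/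
open MeasureTheory Complex

namespace PTaux

lemma hasDerivAt_schwartz (f : SchwartzMap ℝ ℂ) (x : ℝ) :
    HasDerivAt f (deriv f x) x :=
  f.differentiableAt.hasDerivAt

lemma hasDerivAt_reflect_conj (f : SchwartzMap ℝ ℂ) (x : ℝ) :
    HasDerivAt (fun y => (starRingEnd ℂ) (f (-y)))
      (-(starRingEnd ℂ) (deriv f (-x))) x := by
  have h1 : HasDerivAt (fun y : ℝ => f (-y)) (-(deriv (⇑f) (-x))) x := by
    simpa [Function.comp_def] using (hasDerivAt_schwartz f (-x)).scomp x (hasDerivAt_neg x)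
  have h2 := (Complex.conjCLE.toContinuousLinearMap.hasFDerivAt).comp_hasDerivAt x h1
  simpa [Function.comp_def] using h2

lemma integrable_reflect_conj_mul (f g : SchwartzMap ℝ ℂ) :
    Integrable (fun x => (starRingEnd ℂ) (f (-x)) * g x) := by
  refine g.integrable.bdd_mul (c := SchwartzMap.seminorm ℝ 0 0 f) ?_ (Filter.Eventually.of_forall fun x => ?_)
  · exact (Complex.continuous_conj.comp
      (f.continuous.comp continuous_neg)).aestronglyMeasurable
  · simpa using f.norm_le_seminorm ℝ (-x)

/-- Key vanishing: for a non-real eigenvalue, `∫ conj(u₂(-x)) u₂(x) dx = 0`. -/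
lemma key_vanish (V : ℝ → ℂ)
    (hVPT : ∀ x : ℝ, (starRingEnd ℂ) (V (-x)) = V x)
    (μ : ℂ) (hμ : μ.im ≠ 0) (u₂ : SchwartzMap ℝ ℂ)
    (hu₂ : ∀ x : ℝ, deriv (deriv u₂) x + V x * u₂ x = -μ * u₂ x) :
    ∫ x : ℝ, (starRingEnd ℂ) (u₂ (-x)) * u₂ x = 0 := by
  obtain ⟨v₁, hv₁⟩ : ∃ v : SchwartzMap ℝ ℂ, ⇑v = deriv ⇑u₂ :=
    ⟨SchwartzMap.derivCLM ℝ ℂ u₂, funext fun y => SchwartzMap.derivCLM_apply ℝ u₂ y⟩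
  obtain ⟨v₂, hv₂⟩ : ∃ v : SchwartzMap ℝ ℂ, ⇑v = deriv ⇑v₁ :=
    ⟨SchwartzMap.derivCLM ℝ ℂ v₁, funext fun y => SchwartzMap.derivCLM_apply ℝ v₁ y⟩
  have ev₂ : ∀ x, v₂ x = deriv (deriv u₂) x := by
    intro x
    rw [show v₂ x = deriv (⇑v₁) x from congrFun hv₂ x, hv₁]
  set w : ℝ → ℂ := fun x => (starRingEnd ℂ) (u₂ (-x)) with hw
  set w1 : ℝ → ℂ := fun x => -(starRingEnd ℂ) (v₁ (-x)) with hw1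
  set w2 : ℝ → ℂ := fun x => (starRingEnd ℂ) (v₂ (-x)) with hw2
  have hdu₂ : ∀ x, HasDerivAt (⇑u₂) (v₁ x) x := by
    intro x
    rw [show v₁ x = deriv (⇑u₂) x from congrFun hv₁ x]
    exact hasDerivAt_schwartz u₂ x
  have hdv₁ : ∀ x, HasDerivAt (⇑v₁) (v₂ x) x := by
    intro x
    rw [show v₂ x = deriv (⇑v₁) x from congrFun hv₂ x]
    exact hasDerivAt_schwartz v₁ x
  have hdw : ∀ x, HasDerivAt w (w1 x) x := by
    intro x
    have h := hasDerivAt_reflect_conj u₂ x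
    rw [show deriv (⇑u₂) (-x) = v₁ (-x) from (congrFun hv₁ (-x)).symm] at h
    exact h
  have hdw1 : ∀ x, HasDerivAt w1 (w2 x) x := by
    intro x
    have h := (hasDerivAt_reflect_conj v₁ x).neg
    rw [neg_neg, show deriv (⇑v₁) (-x) = v₂ (-x) from (congrFun hv₂ (-x)).symm] at h
    exact h
  have ibp1 : ∫ x : ℝ, w x * v₂ x = -∫ x : ℝ, w1 x * v₁ x := by
    refine integral_mul_deriv_eq_deriv_mul_of_integrable (fun x _ => hdw x) (fun x _ => hdv₁ x) ?_ ?_ ?_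
    · simpa [Pi.mul_def] using integrable_reflect_conj_mul u₂ v₂
    · simp only [hw1, Pi.mul_def, neg_mul]
      exact (integrable_reflect_conj_mul v₁ v₁).neg
    · simpa [Pi.mul_def] using integrable_reflect_conj_mul u₂ v₁
  have ibp2 : ∫ x : ℝ, w1 x * v₁ x = -∫ x : ℝ, w2 x * u₂ x := by
    refine integral_mul_deriv_eq_deriv_mul_of_integrable (fun x _ => hdw1 x) (fun x _ => hdu₂ x) ?_ ?_ ?_
    · simp only [hw1, Pi.mul_def, neg_mul]
      exact (integrable_reflect_conj_mul v₁ v₁).neg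
    · simpa [Pi.mul_def] using integrable_reflect_conj_mul v₂ u₂
    · simp only [hw1, Pi.mul_def, neg_mul]
      exact (integrable_reflect_conj_mul v₁ u₂).neg
  have hIBP : ∫ x : ℝ, w x * v₂ x = ∫ x : ℝ, w2 x * u₂ x := by
    rw [ibp1, ibp2, neg_neg]
  have hpt : ∀ x : ℝ, w2 x * u₂ x - w x * v₂ x = (μ - (starRingEnd ℂ) μ) * (w x * u₂ x) := by
    intro x
    have h1 : v₂ x = -μ * u₂ x - V x * u₂ x := by
      rw [ev₂ x]; linear_combination hu₂ x
    have h2 : v₂ (-x) = -μ * u₂ (-x) - V (-x) * u₂ (-x) := by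
      rw [ev₂ (-x)]; linear_combination hu₂ (-x)
    have h3 : w2 x = -(starRingEnd ℂ) μ * w x - V x * w x := by
      rw [hw2]
      simp only [h2, map_sub, map_mul, map_neg, hVPT, hw]
    rw [h3, h1]
    ring
  have hint1 : Integrable (fun x => w2 x * u₂ x) := integrable_reflect_conj_mul v₂ u₂
  have hint2 : Integrable (fun x => w x * v₂ x) := integrable_reflect_conj_mul u₂ v₂
  have hzero : (μ - (starRingEnd ℂ) μ) * ∫ x : ℝ, w x * u₂ x = 0 := by
    rw [← integral_const_mul]
    have he : ∫ x : ℝ, (μ - (starRingEnd ℂ) μ) * (w x * u₂ x)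
        = ∫ x : ℝ, (w2 x * u₂ x - w x * v₂ x) :=
      integral_congr_ae (Filter.Eventually.of_forall fun x => (hpt x).symm)
    rw [he, integral_sub hint1 hint2, hIBP, sub_self]
  have hne : μ - (starRingEnd ℂ) μ ≠ 0 := by
    intro h
    exact hμ (Complex.conj_eq_iff_im.mp (sub_eq_zero.mp h).symm)
  rcases mul_eq_zero.mp hzero with h | h
  · exact absurd h hne
  · exact h

end PTaux

/-- For a complex (non-real) eigenvalue `μ` of the PT-symmetric Schrödinger operator with
eigenfunction `u₂`, and `u₁(x) := conj(u₂(-x))`, the Gram matrix of `(u₁,u₂)` under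
the PT-product has zero diagonal, off-diagonal entries `∫ u₂²` and `conj(∫ u₂²)`,
and determinant `-|∫ u₂²|²`. -/
theorem PT_gram_complex_pair (V : ℝ → ℂ) (hVcont : Continuous V)
    (hVbdd : ∃ C : ℝ, ∀ x : ℝ, ‖V x‖ ≤ C)
    (hVPT : ∀ x : ℝ, (starRingEnd ℂ) (V (-x)) = V x)
    (μ : ℂ) (hμ : μ.im ≠ 0) (u₂ : SchwartzMap ℝ ℂ)
    (hu₂ : ∀ x : ℝ, deriv (deriv u₂) x + V x * u₂ x = -μ * u₂ x)
    (u₁ : ℝ → ℂ) (hu₁ : ∀ x : ℝ, u₁ x = (starRingEnd ℂ) (u₂ (-x)))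
    (M : Matrix (Fin 2) (Fin 2) ℂ)
    (hM : M = !![PTprod u₁ u₁, PTprod u₁ (fun x => u₂ x);
                 PTprod (fun x => u₂ x) u₁,
                 PTprod (fun x => u₂ x) (fun x => u₂ x)]) :
    M 0 0 = 0 ∧ M 1 1 = 0 ∧
      M 0 1 = ∫ x : ℝ, (u₂ x) ^ 2 ∧
      M 1 0 = (starRingEnd ℂ) (∫ x : ℝ, (u₂ x) ^ 2) ∧
      M.det = -((‖∫ x : ℝ, (u₂ x) ^ 2‖ : ℂ)) ^ 2 := by
  have hI : ∫ x : ℝ, (starRingEnd ℂ) (u₂ (-x)) * u₂ x = 0 :=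
    PTaux.key_vanish V hVPT μ hμ u₂ hu₂
  have h00 : PTprod u₁ u₁ = 0 := by
    unfold PTprod
    rw [← hI]
    refine integral_congr_ae (Filter.Eventually.of_forall fun x => ?_)
    show (starRingEnd ℂ) (u₁ (-x)) * u₁ x = (starRingEnd ℂ) (u₂ (-x)) * u₂ x
    rw [hu₁ x, hu₁ (-x), neg_neg, Complex.conj_conj, mul_comm]
  have h11 : PTprod (fun x => u₂ x) (fun x => u₂ x) = 0 := by
    unfold PTprod
    exact hI
  have h01 : PTprod u₁ (fun x => u₂ x) = ∫ x : ℝ, (u₂ x) ^ 2 := by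
    unfold PTprod
    refine integral_congr_ae (Filter.Eventually.of_forall fun x => ?_)
    show (starRingEnd ℂ) (u₁ (-x)) * u₂ x = (u₂ x) ^ 2
    rw [hu₁ (-x), neg_neg, Complex.conj_conj, sq]
  have h10 : PTprod (fun x => u₂ x) u₁ = (starRingEnd ℂ) (∫ x : ℝ, (u₂ x) ^ 2) := by
    unfold PTprod
    rw [← integral_conj]
    have : ∫ x : ℝ, (starRingEnd ℂ) ((u₂ x) ^ 2)
        = ∫ x : ℝ, (starRingEnd ℂ) ((u₂ (-x)) ^ 2) :=
      (integral_neg_eq_self (fun x : ℝ => (starRingEnd ℂ) ((u₂ x) ^ 2)) volume).symm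
    rw [this]
    refine integral_congr_ae (Filter.Eventually.of_forall fun x => ?_)
    show (starRingEnd ℂ) (u₂ (-x)) * u₁ x = (starRingEnd ℂ) ((u₂ (-x)) ^ 2)
    rw [hu₁ x, map_pow, sq]
  subst hM
  refine ⟨h00, h11, h01, h10, ?_⟩
  rw [Matrix.det_fin_two]
  show PTprod u₁ u₁ * PTprod (fun x => u₂ x) (fun x => u₂ x)
      - PTprod u₁ (fun x => u₂ x) * PTprod (fun x => u₂ x) u₁
      = -((‖∫ x : ℝ, (u₂ x) ^ 2‖ : ℂ)) ^ 2
  rw [h00, h11, h01, h10]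
  rw [zero_mul, zero_sub, Complex.mul_conj]
  rw [Complex.normSq_eq_norm_sq]
  push_cast
  ring
end

section
/- (Amplitude threshold above phase transition) Let α > 0 and suppose A(Z) = A₀·exp(−i·μ₁·Z) with A₀ > 0 real and μ₁ ∈ ℝ satisfies the reduced envelope equation A'' − α·A + σ₁·|A|²·A = 0 on ℝ. Then necessarily σ₁ > 0 and A₀² ≥ α/σ₁. In particular, above phase transition no such nonzero constant-amplitude (soliton) solution exists when σ₁ ≤ 0, and those which exist do not bifurcate from zero amplitude. -/
open Complex

lemma expDeriv (c A₀ : ℂ) (Z : ℝ) :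
    HasDerivAt (fun Z : ℝ => A₀ * Complex.exp (c * Z)) (c * (A₀ * Complex.exp (c * Z))) Z := by
  have h1 : HasDerivAt (fun Z : ℝ => (Z : ℂ)) 1 Z := by
    simpa using (hasDerivAt_id Z).ofReal_comp
  have h2 : HasDerivAt (fun Z : ℝ => c * (Z : ℂ)) c Z := by
    simpa using h1.const_mul c
  have h3 := h2.cexp
  have h4 := h3.const_mul A₀
  convert h4 using 1
  · rfl
  ring

/-- (Amplitude threshold above phase transition) If `α > 0` and the constant-amplitude
function `A(Z) = A₀·exp(−i·μ₁·Z)` with `A₀ > 0` solves the reduced envelope equation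
`A'' − αA + σ₁|A|²A = 0`, then necessarily `σ₁ > 0` and `A₀² ≥ α/σ₁`. -/
theorem amplitude_threshold_above_transition (α σ₁ A₀ μ₁ : ℝ)
    (hα : 0 < α) (hA₀ : 0 < A₀)
    (A : ℝ → ℂ) (hA : A = fun Z : ℝ => (A₀ : ℂ) * Complex.exp (-Complex.I * (μ₁ : ℂ) * (Z : ℂ)))
    (hODE : ∀ Z : ℝ,
      deriv (deriv A) Z - (α : ℂ) * A Z + (σ₁ : ℂ) * (‖A Z‖ : ℂ) ^ 2 * A Z = 0) :
    0 < σ₁ ∧ α / σ₁ ≤ A₀ ^ 2 := by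
  set c : ℂ := -Complex.I * (μ₁ : ℂ) with hc
  have hA' : A = fun Z : ℝ => (A₀ : ℂ) * Complex.exp (c * Z) := by
    simp only [hA, hc, mul_assoc]
  have hd1 : deriv A = fun Z : ℝ => c * ((A₀ : ℂ) * Complex.exp (c * Z)) := by
    funext Z
    rw [hA']
    exact (expDeriv c A₀ Z).deriv
  have hd2 : deriv (deriv A) 0 = c * (c * ((A₀ : ℂ) * Complex.exp (c * 0))) := by
    rw [hd1]
    exact ((expDeriv c A₀ 0).const_mul c).deriv
  have h0 := hODE 0
  have hA0 : A 0 = (A₀ : ℂ) := by simp [hA']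
  have hn0 : ‖(A₀ : ℂ)‖ = A₀ := by simp [abs_of_pos hA₀]
  rw [hd2, hA0, hn0] at h0
  simp only [Complex.ofReal_zero, mul_zero, Complex.exp_zero, mul_one] at h0
  have hA₀ne : (A₀ : ℂ) ≠ 0 := by exact_mod_cast hA₀.ne'
  have hc2 : c * c = -((μ₁ : ℂ) ^ 2) := by
    rw [hc]; ring_nf
    rw [Complex.I_sq]; ring
  have key : ((σ₁ * A₀ ^ 2 : ℝ) : ℂ) = ((α + μ₁ ^ 2 : ℝ) : ℂ) := by
    have h1 : (c * c - (α : ℂ) + (σ₁ : ℂ) * (A₀ : ℂ) ^ 2) * (A₀ : ℂ) = 0 := by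
      rw [← h0]; ring
    rcases mul_eq_zero.mp h1 with h2 | h2
    · rw [hc2] at h2
      push_cast
      linear_combination h2
    · exact absurd h2 hA₀ne
  have keyR : σ₁ * A₀ ^ 2 = α + μ₁ ^ 2 := by exact_mod_cast key
  have hpos : 0 < σ₁ * A₀ ^ 2 := by nlinarith [sq_nonneg μ₁]
  have hσ : 0 < σ₁ := by nlinarith [pow_pos hA₀ 2]
  refine ⟨hσ, ?_⟩
  rw [div_le_iff₀ hσ]
  nlinarith [sq_nonneg μ₁]
end

section
/- (Linearized spectrum of constant-amplitude solutions, unstable case) For μ₁, α ∈ ℝ and λ ∈ ℂ, define the 2×2 matrix L_A(λ) with entries L₁₁ = λ² − 2i·λ·μ₁ + μ₁² + α, L₁₂ = L₂₁ = μ₁² + α, L₂₂ = λ² + 2i·λ·μ₁ + μ₁² + α. If 3μ₁² + α < 0, then λ = √(−2(3μ₁² + α)) is a positive real root of det L_A(λ) = 0; in particular, when α < 0 the constant-amplitude solution is linearly unstable precisely for μ₁² < −α/3. -/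
open Complex Matrix

/-! The determinant factors as `λ² (λ² + 2(3μ₁² + α))`, so the nonzero roots are the square
roots of the real number `−2(3μ₁² + α)`. A square root of a real number has positive real part
only if that number is positive, since `Im (z²) = 2 Re z Im z` forces `z` to be real. -/

theorem det_linearized (m a lam : ℂ) :
    (!![lam ^ 2 - 2 * I * lam * m + m ^ 2 + a, m ^ 2 + a;
        m ^ 2 + a, lam ^ 2 + 2 * I * lam * m + m ^ 2 + a] : Matrix (Fin 2) (Fin 2) ℂ).det =
      lam ^ 2 * (lam ^ 2 + 2 * (3 * m ^ 2 + a)) := by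
  rw [det_fin_two_of]
  linear_combination (-4 * lam ^ 2 * m ^ 2) * I_sq

theorem Complex.ofReal_sqrt_sq {c : ℝ} (hc : 0 ≤ c) : ((√c : ℝ) : ℂ) ^ 2 = c := by
  rw [← ofReal_pow, Real.sq_sqrt hc]

theorem Complex.exists_re_pos_sq_eq_ofReal_iff (c : ℝ) :
    (∃ z : ℂ, 0 < z.re ∧ z ^ 2 = c) ↔ 0 < c := by
  constructor
  · rintro ⟨z, hre, hsq⟩
    have him : z.im = 0 := by
      have h := congrArg Complex.im hsq
      simp only [sq, mul_im, ofReal_im] at h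
      nlinarith
    have hre_sq : z.re ^ 2 = c := by
      have h := congrArg Complex.re hsq
      simpa [sq, mul_re, him] using h
    rw [← hre_sq]
    positivity
  · intro hc
    exact ⟨√c, by simpa using Real.sqrt_pos.mpr hc, ofReal_sqrt_sq hc.le⟩

/-- (Linearized spectrum, unstable case) If `3μ₁² + α < 0`, then
`λ = √(−2(3μ₁² + α))` is a positive real root of `det L_A(λ) = 0`; in particular, for
`α < 0`, the linearization has a root with positive real part precisely when
`μ₁² < −α/3`. -/
theorem linearized_spectrum_unstable (μ₁ α : ℝ)
    (LA : ℂ → Matrix (Fin 2) (Fin 2) ℂ)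
    (hLA : ∀ lam : ℂ, LA lam =
      !![lam ^ 2 - 2 * Complex.I * lam * (μ₁ : ℂ) + (μ₁ : ℂ) ^ 2 + (α : ℂ),
         (μ₁ : ℂ) ^ 2 + (α : ℂ);
         (μ₁ : ℂ) ^ 2 + (α : ℂ),
         lam ^ 2 + 2 * Complex.I * lam * (μ₁ : ℂ) + (μ₁ : ℂ) ^ 2 + (α : ℂ)]) :
    (3 * μ₁ ^ 2 + α < 0 →
        0 < Real.sqrt (-(2 * (3 * μ₁ ^ 2 + α))) ∧
          (LA ((Real.sqrt (-(2 * (3 * μ₁ ^ 2 + α))) : ℝ) : ℂ)).det = 0) ∧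
      (α < 0 →
        ((∃ lam : ℂ, 0 < lam.re ∧ (LA lam).det = 0) ↔ μ₁ ^ 2 < -α / 3)) := by
  set c : ℝ := -(2 * (3 * μ₁ ^ 2 + α)) with hc
  have hdet : ∀ lam : ℂ, (LA lam).det = lam ^ 2 * (lam ^ 2 - c) := fun lam => by
    rw [hLA, det_linearized, hc]
    push_cast
    ring
  have root_iff : ∀ lam : ℂ, 0 < lam.re → ((LA lam).det = 0 ↔ lam ^ 2 = c) := fun lam hre => by
    have hlam : lam ≠ 0 := by rintro rfl; simp at hre
    rw [hdet, mul_eq_zero, sub_eq_zero, or_iff_right (pow_ne_zero 2 hlam)]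
  refine ⟨fun hneg => ?_, fun _ => ?_⟩
  · have hc_pos : 0 < c := by linarith
    exact ⟨Real.sqrt_pos.mpr hc_pos, by rw [hdet, ofReal_sqrt_sq hc_pos.le, sub_self, mul_zero]⟩
  · calc (∃ lam : ℂ, 0 < lam.re ∧ (LA lam).det = 0)
        ↔ ∃ lam : ℂ, 0 < lam.re ∧ lam ^ 2 = c :=
          exists_congr fun lam => and_congr_right (root_iff lam)
      _ ↔ 0 < c := exists_re_pos_sq_eq_ofReal_iff c
      _ ↔ μ₁ ^ 2 < -α / 3 := by constructor <;> intro h <;> linarith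
end
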